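/- Suppose A is a real symmetric N×N matrix with signature (N−1, 1) (N−1 positive and 1 negative eigenvalue), and suppose there exists a vector v ∈ ℝᴺ with det(A + v vᵀ) = 0. Then A + v vᵀ is positive semidefinite of rank N−1. -/

import Mathlib

/-!
Congruence by `P` turns `A + v vᵀ` into `D + w wᵀ` with `D = diag(-1, 1, …, 1)` and `w = Pᵀ v`,
and `vᵀ A⁻¹ v = -1` becomes `w₀² = 1 + |w'|²`. Then
`xᵀ (D + w wᵀ) x = -x₀² + |x'|² + (w₀ x₀ + w'·x')²`, and multiplying by `|w'|²` rewrites this as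
`(|w'|² x₀ + w₀ (w'·x'))² + (|w'|² |x'|² - (w'·x')²)`, which is nonnegative by Cauchy–Schwarz
(if `w' = 0`, the form is just `|x'|²`).
For the rank, the kernel of `A + v vᵀ` is exactly the line through `A⁻¹ v`.
-/

open Matrix

namespace Matrix

variable {n K : Type*} [Fintype n] [DecidableEq n] [Field K]

theorem ker_mulVecLin_add_vecMulVec {A : Matrix n n K} (hA : IsUnit A.det) {u v : n → K}
    (h : v ⬝ᵥ (A⁻¹ *ᵥ u) = -1) :
    LinearMap.ker (A + vecMulVec u v).mulVecLin = K ∙ (A⁻¹ *ᵥ u) := by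
  ext x
  simp only [LinearMap.mem_ker, mulVecLin_apply, Submodule.mem_span_singleton, add_mulVec,
    vecMulVec_mulVec, op_smul_eq_smul]
  constructor
  · intro hx
    refine ⟨-(v ⬝ᵥ x), ?_⟩
    have hx' := congrArg (A⁻¹ *ᵥ ·) hx
    simp only [mulVec_add, mulVec_mulVec, nonsing_inv_mul _ hA, one_mulVec, mulVec_smul,
      mulVec_zero] at hx'
    rw [neg_smul, neg_eq_iff_add_eq_zero, add_comm, hx']
  · rintro ⟨c, rfl⟩
    rw [mulVec_smul, mulVec_mulVec, mul_nonsing_inv _ hA, one_mulVec, dotProduct_smul,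
      smul_eq_mul, h]
    simp

theorem rank_add_vecMulVec_of_dotProduct_inv_mulVec_eq_neg_one {A : Matrix n n K}
    (hA : IsUnit A.det) {u v : n → K} (h : v ⬝ᵥ (A⁻¹ *ᵥ u) = -1) :
    (A + vecMulVec u v).rank = Fintype.card n - 1 := by
  have hu : A⁻¹ *ᵥ u ≠ 0 := by
    rintro hu
    simp [hu] at h
  have := LinearMap.finrank_range_add_finrank_ker (A + vecMulVec u v).mulVecLin
  rw [ker_mulVecLin_add_vecMulVec hA h, finrank_span_singleton hu,
    Module.finrank_fintype_fun_eq_card] at this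
  rw [rank]
  omega

theorem mul_eq_one_of_transpose_mul_mul_eq {R : Type*} [CommRing R] {A P D : Matrix n n R}
    (hP : IsUnit P.det) (hD : D * D = 1) (h : Pᵀ * A * P = D) : A * (P * D * Pᵀ) = 1 := by
  have hPt : IsUnit Pᵀ.det := isUnit_det_transpose P hP
  have hA : A = Pᵀ⁻¹ * D * P⁻¹ := by
    rw [← h, Matrix.mul_assoc, mul_nonsing_inv_cancel_right _ _ hP,
      nonsing_inv_mul_cancel_left _ _ hPt]
  rw [hA]
  simp only [Matrix.mul_assoc, nonsing_inv_mul_cancel_left _ _ hP]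
  rw [← Matrix.mul_assoc D D, hD, Matrix.one_mul, nonsing_inv_mul _ hPt]

theorem dotProduct_fin_succ {α : Type*} [NonUnitalNonAssocSemiring α] {m : ℕ}
    (x y : Fin (m + 1) → α) : x ⬝ᵥ y = x 0 * y 0 + Fin.tail x ⬝ᵥ Fin.tail y := by
  simp [dotProduct, Fin.sum_univ_succ, Fin.tail]

end Matrix

theorem neg_sq_add_dotProduct_self_add_sq_nonneg {ι : Type*} [Fintype ι] (a b : ℝ)
    (x w : ι → ℝ) (hb : b ^ 2 = 1 + w ⬝ᵥ w) :
    0 ≤ -a ^ 2 + x ⬝ᵥ x + (b * a + w ⬝ᵥ x) ^ 2 := by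
  have hCS : (w ⬝ᵥ x) ^ 2 ≤ (w ⬝ᵥ w) * (x ⬝ᵥ x) := by
    simpa only [dotProduct, sq] using Finset.sum_mul_sq_le_sq_mul_sq Finset.univ w x
  have hx : 0 ≤ x ⬝ᵥ x := by simpa using dotProduct_self_star_nonneg x
  rcases (show 0 ≤ w ⬝ᵥ w by simpa using dotProduct_self_star_nonneg w).eq_or_lt with hw | hw
  · have hwx : w ⬝ᵥ x = 0 := by nlinarith
    rw [hwx, add_zero, mul_pow, hb, ← hw]
    linarith
  · have key : (w ⬝ᵥ w) * (-a ^ 2 + x ⬝ᵥ x + (b * a + w ⬝ᵥ x) ^ 2) =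
        ((w ⬝ᵥ w) * a + b * (w ⬝ᵥ x)) ^ 2 + ((w ⬝ᵥ w) * (x ⬝ᵥ x) - (w ⬝ᵥ x) ^ 2) := by
      linear_combination ((w ⬝ᵥ w) * a ^ 2 - (w ⬝ᵥ x) ^ 2) * hb
    refine nonneg_of_mul_nonneg_right ?_ hw
    rw [key]
    exact add_nonneg (sq_nonneg _) (sub_nonneg.2 hCS)

def minkowskiSign (N : ℕ) (i : Fin N) : ℝ := if (i : ℕ) = 0 then -1 else 1

theorem diagonal_minkowskiSign_mul_self (N : ℕ) :
    diagonal (minkowskiSign N) * diagonal (minkowskiSign N) = 1 := by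
  rw [diagonal_mul_diagonal, ← diagonal_one]
  congr 1
  ext i
  unfold minkowskiSign
  split_ifs <;> norm_num

theorem dotProduct_diagonal_minkowskiSign_mulVec {m : ℕ} (x : Fin (m + 1) → ℝ) :
    x ⬝ᵥ (diagonal (minkowskiSign (m + 1)) *ᵥ x) = -x 0 ^ 2 + Fin.tail x ⬝ᵥ Fin.tail x := by
  simp [dotProduct, Fin.sum_univ_succ, Fin.tail, minkowskiSign, mulVec_diagonal, sq]

theorem posSemidef_diagonal_minkowskiSign_add_vecMulVec {N : ℕ} (w : Fin N → ℝ)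
    (hw : w ⬝ᵥ (diagonal (minkowskiSign N) *ᵥ w) = -1) :
    (diagonal (minkowskiSign N) + vecMulVec w w).PosSemidef := by
  cases N with
  | zero => simp at hw
  | succ m =>
    rw [posSemidef_iff_dotProduct_mulVec]
    refine ⟨(isHermitian_diagonal _).add (by simpa using (posSemidef_vecMulVec_self_star w).1),
      fun x => ?_⟩
    rw [dotProduct_diagonal_minkowskiSign_mulVec] at hw
    rw [star_trivial, add_mulVec, dotProduct_add, dotProduct_diagonal_minkowskiSign_mulVec,
      vecMulVec_mulVec, op_smul_eq_smul, dotProduct_smul, smul_eq_mul, dotProduct_comm x w,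
      dotProduct_fin_succ w x, ← sq]
    exact neg_sq_add_dotProduct_self_add_sq_nonneg _ _ _ _ (by linarith)

theorem stmt_16_general (N : ℕ) (A : Matrix (Fin N) (Fin N) ℝ)
    (P : Matrix (Fin N) (Fin N) ℝ) (hP : IsUnit P.det)
    (hsig : Pᵀ * A * P =
      Matrix.diagonal (fun i : Fin N => if (i : ℕ) = 0 then (-1 : ℝ) else 1))
    (v : Fin N → ℝ)
    (hquad : v ⬝ᵥ (A⁻¹ *ᵥ v) = -1) :
    (A + Matrix.vecMulVec v v).PosSemidef ∧ (A + Matrix.vecMulVec v v).rank = N - 1 := by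
  replace hsig : Pᵀ * A * P = diagonal (minkowskiSign N) := hsig
  set D := diagonal (minkowskiSign N)
  have hAinv : A * (P * D * Pᵀ) = 1 :=
    mul_eq_one_of_transpose_mul_mul_eq hP (diagonal_minkowskiSign_mul_self N) hsig
  have hA : IsUnit A.det := isUnit_det_of_right_inverse hAinv
  refine ⟨?_, by simpa using rank_add_vecMulVec_of_dotProduct_inv_mulVec_eq_neg_one hA hquad⟩
  set w := Pᵀ *ᵥ v
  have hw : w ⬝ᵥ (D *ᵥ w) = -1 := by
    rwa [inv_eq_right_inv hAinv, ← mulVec_mulVec, ← mulVec_mulVec, dotProduct_mulVec,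
      ← mulVec_transpose] at hquad
  have hconj : Pᵀ * (A + vecMulVec v v) * P = D + vecMulVec w w := by
    rw [Matrix.mul_add, Matrix.add_mul, hsig, mul_vecMulVec, vecMulVec_mul, ← mulVec_transpose]
  rw [← ((isUnit_iff_isUnit_det P).2 hP).posSemidef_star_left_conjugate_iff,
    star_eq_conjTranspose, conjTranspose_eq_transpose_of_trivial, hconj]
  exact posSemidef_diagonal_minkowskiSign_add_vecMulVec w hw

/-- If `A` is a real symmetric `N×N` matrix of signature `(N−1, 1)` (witnessed by a
congruence to the diagonal matrix with one `−1` and `N−1` ones), `vᵀ A⁻¹ v = −1`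
(equivalently `det(A + v vᵀ) = 0`), then `A + v vᵀ` is positive semidefinite of rank `N−1`. -/
theorem stmt_16 (N : ℕ) (A : Matrix (Fin N) (Fin N) ℝ) (hsymm : A.IsSymm)
    (P : Matrix (Fin N) (Fin N) ℝ) (hP : IsUnit P.det)
    (hsig : Pᵀ * A * P =
      Matrix.diagonal (fun i : Fin N => if (i : ℕ) = 0 then (-1 : ℝ) else 1))
    (v : Fin N → ℝ)
    (hdet : (A + Matrix.vecMulVec v v).det = 0)
    (hquad : v ⬝ᵥ (A⁻¹ *ᵥ v) = -1) :
    (A + Matrix.vecMulVec v v).PosSemidef ∧ (A + Matrix.vecMulVec v v).rank = N - 1 :=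
  stmt_16_general N A P hP hsig v hquad
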